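/- Let h: Ω → Ω be a measurable bijection inducing a bounded composition operator C_h on L²(Ω), with non-singular inverse h⁻¹ and g_{h⁻¹} ∈ L^∞. Define W_h f := (f ∘ h) · g_{h⁻¹}^{1/2}. If g_h ≥ r almost everywhere for some r > 0, then W_h is a unitary operator on L²(Ω) with inverse (and adjoint) given by W̃ f := (f · g_{h⁻¹}^{-1/2}) ∘ h⁻¹. -/

import Mathlib

/-!
Write `g = d(ζ_#μ)/dμ` for the weight. Changing variables along `ζ` turns
`∫ (f ∘ h) (p ∘ h) g dμ` into `∫ f p dμ`, so `W` preserves inner products. Since `h` and `ζ` are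
mutually inverse and both non-singular, `μ` and `ζ_#μ` are equivalent, so `0 < g < ∞` a.e. and
`Wt` undoes the weight pointwise: `W ∘ Wt = id`. A map that preserves inner products is injective,
so `Wt ∘ W = id` as well, and `⟪W f, p⟫ = ⟪W f, W (Wt p)⟫ = ⟪f, Wt p⟫`.
-/

open MeasureTheory ENNReal

/-- Lebesgue measure on a subset `Ω` of `ℝ^d`, viewed as a measure on the subtype. -/
noncomputable def lebOn {d : ℕ} (Ω : Set (EuclideanSpace ℝ (Fin d))) : Measure Ω :=
  (volume : Measure (EuclideanSpace ℝ (Fin d))).comap Subtype.val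

theorem sigmaFinite_comap_subtype_val {α : Type*} [MeasurableSpace α] {s : Set α}
    (hs : MeasurableSet s) (μ : Measure α) [SigmaFinite μ] :
    SigmaFinite (μ.comap ((↑) : s → α)) :=
  SigmaFinite.of_map _ measurable_subtype_coe.aemeasurable <| by
    rw [map_comap_subtype_coe hs]
    infer_instance

section InnerProduct

variable {𝕜 E F : Type*} [RCLike 𝕜] [NormedAddCommGroup E] [InnerProductSpace 𝕜 E]
  [NormedAddCommGroup F] [InnerProductSpace 𝕜 F]

theorem leftInverse_of_inner_map_map_of_rightInverse {W : F →ₗ[𝕜] E} {Wt : E → F}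
    (hinner : ∀ f p, inner 𝕜 (W f) (W p) = inner 𝕜 f p) (hright : Function.RightInverse Wt W) :
    Function.LeftInverse Wt W := fun f =>
  (W.isometryOfInner hinner).injective (hright (W f))

theorem inner_map_left_eq_inner_right_of_rightInverse {W : F → E} {Wt : E → F}
    (hinner : ∀ f p, inner 𝕜 (W f) (W p) = inner 𝕜 f p) (hright : Function.RightInverse Wt W)
    (f : F) (p : E) : inner 𝕜 (W f) p = inner 𝕜 f (Wt p) := by
  rw [← hinner, hright p]

end InnerProduct

section WeightedComposition

variable {α β : Type*} [MeasurableSpace α] [MeasurableSpace β] {μ : Measure α} {ν : Measure β}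
  (e : α ≃ᵐ β)

theorem MeasureTheory.L2.real_inner_def (f p : Lp ℝ 2 μ) : inner ℝ f p = ∫ x, f x * p x ∂μ := by
  simp only [L2.inner_def, Real.inner_apply]

theorem absolutelyContinuous_map_symm_of_map (hac : μ.map e ≪ ν) : μ ≪ ν.map e.symm := by
  simpa using hac.map e.symm.measurable

theorem ae_toReal_rnDeriv_map_symm_pos [SigmaFinite μ] [SigmaFinite ν] (hac : μ.map e ≪ ν) :
    ∀ᵐ x ∂μ, 0 < ((ν.map e.symm).rnDeriv μ x).toReal := by
  have := e.symm.sigmaFinite_map (μ := ν)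
  filter_upwards [Measure.rnDeriv_pos' (absolutelyContinuous_map_symm_of_map e hac),
    Measure.rnDeriv_ne_top (ν.map e.symm) μ] with x hpos hfin
  exact ENNReal.toReal_pos hpos.ne' hfin

theorem inner_eq_of_ae_eq_weighted_comp [SigmaFinite μ] [SigmaFinite ν] (hac_symm : ν.map e.symm ≪ μ)
    {F P : Lp ℝ 2 μ} {f p : Lp ℝ 2 ν}
    (hF : F =ᵐ[μ] fun x => f (e x) * Real.sqrt (((ν.map e.symm).rnDeriv μ x).toReal))
    (hP : P =ᵐ[μ] fun x => p (e x) * Real.sqrt (((ν.map e.symm).rnDeriv μ x).toReal)) :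
    inner ℝ F P = inner ℝ f p := by
  have := e.symm.sigmaFinite_map (μ := ν)
  calc inner ℝ F P
      = ∫ x, ((ν.map e.symm).rnDeriv μ x).toReal • (f (e x) * p (e x)) ∂μ := by
        rw [L2.real_inner_def]
        refine integral_congr_ae ?_
        filter_upwards [hF, hP] with x hFx hPx
        rw [hFx, hPx, smul_eq_mul]
        linear_combination (f (e x) * p (e x)) *
          Real.mul_self_sqrt (((ν.map e.symm).rnDeriv μ x).toReal_nonneg)
    _ = ∫ x, f (e x) * p (e x) ∂(ν.map e.symm) := integral_rnDeriv_smul hac_symm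
    _ = inner ℝ f p := by
        rw [integral_map_equiv, L2.real_inner_def]
        simp only [MeasurableEquiv.apply_symm_apply]

theorem eq_of_ae_eq_weighted_comp_inverse [SigmaFinite μ] [SigmaFinite ν] (hac : μ.map e ≪ ν)
    {u : Lp ℝ 2 ν} {v f : Lp ℝ 2 μ}
    (hu : u =ᵐ[ν] fun y =>
      f (e.symm y) * (Real.sqrt (((ν.map e.symm).rnDeriv μ (e.symm y)).toReal))⁻¹)
    (hv : v =ᵐ[μ] fun x => u (e x) * Real.sqrt (((ν.map e.symm).rnDeriv μ x).toReal)) :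
    v = f := by
  have hu_comp : (fun x => u (e x)) =ᵐ[μ] fun x =>
      f (e.symm (e x)) * (Real.sqrt (((ν.map e.symm).rnDeriv μ (e.symm (e x))).toReal))⁻¹ :=
    Measure.QuasiMeasurePreserving.ae_eq ⟨e.measurable, hac⟩ hu
  refine Lp.ext ?_
  filter_upwards [hv, hu_comp, ae_toReal_rnDeriv_map_symm_pos e hac] with x hvx hux hpos
  rw [hvx, hux, MeasurableEquiv.symm_apply_apply,
    inv_mul_cancel_right₀ (Real.sqrt_ne_zero'.mpr hpos)]

end WeightedComposition

theorem weighted_composition_unitary_general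
    {d : ℕ} (Ω : Set (EuclideanSpace ℝ (Fin d))) (hΩ : IsOpen Ω)
    (h ζ : Ω → Ω) (hm : Measurable h) (hmζ : Measurable ζ)
    (hζh : ∀ x, ζ (h x) = x) (hhζ : ∀ x, h (ζ x) = x)
    (hac : (lebOn Ω).map h ≪ lebOn Ω)
    (hacζ : (lebOn Ω).map ζ ≪ lebOn Ω)
    (W Wt : Lp ℝ 2 (lebOn Ω) →L[ℝ] Lp ℝ 2 (lebOn Ω))
    (hW : ∀ f : Lp ℝ 2 (lebOn Ω), (W f : Ω → ℝ) =ᵐ[lebOn Ω]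
      fun x => f (h x) * Real.sqrt ((((lebOn Ω).map ζ).rnDeriv (lebOn Ω) x).toReal))
    (hWt : ∀ f : Lp ℝ 2 (lebOn Ω), (Wt f : Ω → ℝ) =ᵐ[lebOn Ω]
      fun x => f (ζ x) * (Real.sqrt ((((lebOn Ω).map ζ).rnDeriv (lebOn Ω) (ζ x)).toReal))⁻¹) :
    (∀ f, Wt (W f) = f) ∧ (∀ f, W (Wt f) = f) ∧
      (∀ f p : Lp ℝ 2 (lebOn Ω), (inner ℝ (W f) (W p) : ℝ) = inner ℝ f p) ∧
      (∀ f p : Lp ℝ 2 (lebOn Ω), (inner ℝ (W f) p : ℝ) = inner ℝ f (Wt p)) := by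
  have : SigmaFinite (lebOn Ω) := sigmaFinite_comap_subtype_val hΩ.measurableSet volume
  let e : Ω ≃ᵐ Ω := ⟨⟨h, ζ, hζh, hhζ⟩, hm, hmζ⟩
  have hinner : ∀ f p, inner ℝ (W f) (W p) = inner ℝ f p := fun f p =>
    inner_eq_of_ae_eq_weighted_comp e hacζ (hW f) (hW p)
  have hright : Function.RightInverse Wt W := fun f =>
    eq_of_ae_eq_weighted_comp_inverse e hac (hWt f) (hW (Wt f))
  exact ⟨leftInverse_of_inner_map_map_of_rightInverse (W := W.toLinearMap) hinner hright, hright,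
    hinner, inner_map_left_eq_inner_right_of_rightInverse hinner hright⟩

theorem weighted_composition_unitary
    {d : ℕ} (Ω : Set (EuclideanSpace ℝ (Fin d))) (hΩ : IsOpen Ω)
    (h ζ : Ω → Ω) (hm : Measurable h) (hmζ : Measurable ζ)
    (hζh : ∀ x, ζ (h x) = x) (hhζ : ∀ x, h (ζ x) = x)
    (hac : (lebOn Ω).map h ≪ lebOn Ω)
    (hacζ : (lebOn Ω).map ζ ≪ lebOn Ω)
    (hbd : essSup (((lebOn Ω).map h).rnDeriv (lebOn Ω)) (lebOn Ω) ≠ ⊤)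
    (hbdζ : essSup (((lebOn Ω).map ζ).rnDeriv (lebOn Ω)) (lebOn Ω) ≠ ⊤)
    (W Wt : Lp ℝ 2 (lebOn Ω) →L[ℝ] Lp ℝ 2 (lebOn Ω))
    (hW : ∀ f : Lp ℝ 2 (lebOn Ω), (W f : Ω → ℝ) =ᵐ[lebOn Ω]
      fun x => f (h x) * Real.sqrt ((((lebOn Ω).map ζ).rnDeriv (lebOn Ω) x).toReal))
    (hWt : ∀ f : Lp ℝ 2 (lebOn Ω), (Wt f : Ω → ℝ) =ᵐ[lebOn Ω]
      fun x => f (ζ x) * (Real.sqrt ((((lebOn Ω).map ζ).rnDeriv (lebOn Ω) (ζ x)).toReal))⁻¹)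
    (r : ℝ≥0∞) (hr : 0 < r)
    (hge : ∀ᵐ x ∂(lebOn Ω), r ≤ ((lebOn Ω).map h).rnDeriv (lebOn Ω) x) :
    (∀ f, Wt (W f) = f) ∧ (∀ f, W (Wt f) = f) ∧
      (∀ f p : Lp ℝ 2 (lebOn Ω), (inner ℝ (W f) (W p) : ℝ) = inner ℝ f p) ∧
      (∀ f p : Lp ℝ 2 (lebOn Ω), (inner ℝ (W f) p : ℝ) = inner ℝ f (Wt p)) :=
  weighted_composition_unitary_general Ω hΩ h ζ hm hmζ hζh hhζ hac hacζ W Wt hW hWt
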